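/- With the notation of the symmetric Jacobi matrix J_{2n}: if λ satisfies (λ − α_1 + √w_0)·det(E_2) − w_1·det(E_3) = 0, then the vector v with v_j = det(E_{n-j+2})/√(w_{n-j+1}⋯w_{n-1}) for j = 1,…,n and v_{2n+1-j} = −v_j for j = 1,…,n is an eigenvector of J_{2n} with eigenvalue λ. -/

import Mathlib

/-!
`J_{2n}` is tridiagonal and persymmetric, so for an antisymmetric vector `v` the entries of
`J v` are antisymmetric as well, and the eigenvalue equation only has to be checked on the
first `n` rows. After clearing the normalisation `√(w_{n-j} ⋯ w_{n-1})`, row `j` becomes the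
three-term recurrence `det E_k = (λ - α_k) det E_{k+1} - w_k det E_{k+2}` (expansion of a
tridiagonal determinant along its last row). In the last row `n - 1` the coupling `√w_0` meets
`v_n = -v_{n-1}`, and the equation becomes the condition on `λ`.
-/

/-- The `2n × 2n` mirror-symmetric Jacobi matrix with diagonal
`(α_n, …, α_1, α_1, …, α_n)` and off-diagonal couplings
`(√w_{n-1}, …, √w_1, √w_0, √w_1, …, √w_{n-1})` (0-based indices). -/
noncomputable def Jmat (α w : ℕ → ℝ) (n : ℕ) : Matrix (Fin (2*n)) (Fin (2*n)) ℝ :=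
  Matrix.of fun i j =>
    if i.1 = j.1 then (if i.1 ≤ n - 1 then α (n - i.1) else α (i.1 - n + 1))
    else if i.1 + 1 = j.1 ∨ j.1 + 1 = i.1 then
      Real.sqrt (w (((n : ℤ) - 1 - (min i.1 j.1 : ℤ)).natAbs))
    else 0

/-- The `(n-k+1) × (n-k+1)` tridiagonal matrix `E_k` with diagonal
`(λ-α_n, λ-α_{n-1}, …, λ-α_k)` and off-diagonal entries `(-√w_{n-1}, …, -√w_k)`. -/
noncomputable def Emat (lam : ℝ) (α w : ℕ → ℝ) (n k : ℕ) : Matrix (Fin (n + 1 - k)) (Fin (n + 1 - k)) ℝ :=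
  Matrix.of fun i j =>
    if i.1 = j.1 then lam - α (n - i.1)
    else if i.1 + 1 = j.1 ∨ j.1 + 1 = i.1 then -Real.sqrt (w (n - 1 - min i.1 j.1))
    else 0


/-- The candidate eigenvector of `J_{2n}`: components
`v_j = det(E_{n-j+2}) / √(w_{n-j+1} ⋯ w_{n-1})` for `j = 1, …, n` (here 0-based),
reflected with sign `s` on the second half. -/
noncomputable def vsym (lam : ℝ) (α w : ℕ → ℝ) (n : ℕ) (s : ℝ) : Fin (2*n) → ℝ := fun j =>
  if j.1 < n then
    (Emat lam α w n (n - j.1 + 1)).det / Real.sqrt (∏ m ∈ Finset.Ico (n - j.1) n, w m)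
  else
    s * ((Emat lam α w n (n - (2*n - 1 - j.1) + 1)).det /
      Real.sqrt (∏ m ∈ Finset.Ico (n - (2*n - 1 - j.1)) n, w m))

open Matrix

section

variable {R : Type*}

def tridiag [Zero R] (d e : ℕ → R) (m : ℕ) : Matrix (Fin m) (Fin m) R :=
  Matrix.of fun i j =>
    if i.1 = j.1 then d i.1
    else if i.1 + 1 = j.1 ∨ j.1 + 1 = i.1 then e (min i.1 j.1) else 0

theorem tridiag_apply [Zero R] (d e : ℕ → R) (m : ℕ) (i j : Fin m) :
    tridiag d e m i j = if i.1 = j.1 then d i.1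
      else if i.1 + 1 = j.1 ∨ j.1 + 1 = i.1 then e (min i.1 j.1) else 0 := rfl

theorem tridiag_eq_zero [Zero R] (d e : ℕ → R) {m : ℕ} {i j : Fin m}
    (h : i.1 + 1 < j.1 ∨ j.1 + 1 < i.1) : tridiag d e m i j = 0 := by
  rw [tridiag_apply, if_neg (by omega), if_neg (by omega)]

theorem det_tridiag_succ_succ [CommRing R] (d e : ℕ → R) (m : ℕ) :
    (tridiag d e (m + 2)).det
      = d (m + 1) * (tridiag d e (m + 1)).det - e m ^ 2 * (tridiag d e m).det := by
  have hcol : (Fin.last m).castSucc.succAbove ∘ Fin.castSucc = Fin.castSucc ∘ Fin.castSucc :=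
    funext fun j => Fin.succAbove_castSucc_of_lt _ _
      (Fin.castSucc_lt_castSucc_iff.2 j.castSucc_lt_last)
  -- the minor of the subdiagonal entry has a single nonzero entry `e m` in its last column
  have hminor : ((tridiag d e (m + 2)).submatrix Fin.castSucc
      (Fin.last m).castSucc.succAbove).det = e m * (tridiag d e m).det := by
    rw [det_succ_column _ (Fin.last _), Fin.sum_univ_castSucc, Finset.sum_eq_zero]
    · have hlead : (tridiag d e (m + 2)).submatrix (Fin.castSucc ∘ Fin.castSucc)
          (Fin.castSucc ∘ Fin.castSucc) = tridiag d e m := rfl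
      simp [tridiag_apply, Fin.succAbove_last, hcol, hlead]
    · intro x _
      simp [tridiag_eq_zero d e
        (Or.inl (by simp : (x.castSucc.castSucc).1 + 1 < (Fin.last (m + 1)).1))]
  rw [det_succ_row _ (Fin.last _), Fin.sum_univ_castSucc, Fin.sum_univ_castSucc,
    Finset.sum_eq_zero]
  · have hlead : (tridiag d e (m + 2)).submatrix Fin.castSucc Fin.castSucc
        = tridiag d e (m + 1) := rfl
    simp only [Fin.val_last, Fin.val_castSucc, Fin.succAbove_last, tridiag_apply, hminor, hlead,
      Nat.add_eq_left, one_ne_zero, ↓reduceIte, or_true,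
      le_add_iff_nonneg_right, zero_le, inf_of_le_right, odd_add_one_self, Odd.neg_one_pow,
      Even.add_self, Even.neg_pow, one_pow, neg_mul, one_mul, zero_add]
    ring
  · intro x _
    simp [tridiag_eq_zero d e
      (Or.inr (by simp : (x.castSucc.castSucc).1 + 1 < (Fin.last (m + 1)).1))]

theorem tridiag_mulVec_apply_zero [NonUnitalNonAssocSemiring R] (d e f : ℕ → R) {m : ℕ}
    (hm : 1 < m) :
    (tridiag d e m *ᵥ fun k => f k) ⟨0, by omega⟩ = d 0 * f 0 + e 0 * f 1 := by
  rw [mulVec, dotProduct,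
    ← Finset.sum_subset (Finset.subset_univ {⟨0, by omega⟩, ⟨1, hm⟩})]
  · rw [Finset.sum_pair (by simp [Fin.ext_iff])]
    simp [tridiag_apply]
  · intro k _ hk
    simp only [Finset.mem_insert, Finset.mem_singleton, Fin.ext_iff, not_or] at hk
    rw [tridiag_eq_zero d e (by dsimp only; omega), zero_mul]

theorem tridiag_mulVec_apply_succ [NonUnitalNonAssocSemiring R] (d e f : ℕ → R) {m j : ℕ}
    (hj : j + 2 < m) :
    (tridiag d e m *ᵥ fun k => f k) ⟨j + 1, by omega⟩
      = e j * f j + d (j + 1) * f (j + 1) + e (j + 1) * f (j + 2) := by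
  rw [mulVec, dotProduct, ← Finset.sum_subset (Finset.subset_univ
    {⟨j, by omega⟩, ⟨j + 1, by omega⟩, ⟨j + 2, hj⟩})]
  · rw [Finset.sum_insert (by simp [Fin.ext_iff]), Finset.sum_pair (by simp [Fin.ext_iff]),
      add_assoc]
    simp [tridiag_apply]
  · intro k _ hk
    simp only [Finset.mem_insert, Finset.mem_singleton, Fin.ext_iff, not_or] at hk
    rw [tridiag_eq_zero d e (by dsimp only; omega), zero_mul]

theorem tridiag_submatrix_rev [Zero R] {d e : ℕ → R} {m : ℕ}
    (hd : ∀ i < m, d (m - 1 - i) = d i) (he : ∀ i, i + 1 < m → e (m - 2 - i) = e i) :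
    (tridiag d e m).submatrix Fin.rev Fin.rev = tridiag d e m := by
  ext i j
  simp only [submatrix_apply, tridiag_apply, Fin.val_rev]
  have := i.isLt
  have := j.isLt
  by_cases hij : i.1 = j.1
  · rw [if_pos (by omega), if_pos hij, ← hd i i.isLt]
    congr 1; omega
  by_cases hadj : i.1 + 1 = j.1 ∨ j.1 + 1 = i.1
  · rw [if_neg (by omega), if_pos (by omega), if_neg hij, if_pos hadj, ← he (min i j) (by omega)]
    congr 1; omega
  · rw [if_neg (by omega), if_neg (by omega), if_neg hij, if_neg hadj]

theorem mulVec_eq_smul_of_submatrix_rev [CommSemiring R] {N : ℕ}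
    {M : Matrix (Fin N) (Fin N) R} (hM : M.submatrix Fin.rev Fin.rev = M) {v : Fin N → R}
    {s : R} (hv : ∀ k, v k.rev = s * v k) {lam : R}
    (hrow : ∀ i : Fin N, i ≤ i.rev → (M *ᵥ v) i = lam * v i) :
    M *ᵥ v = lam • v := by
  have hrev : ∀ i, (M *ᵥ v) i = s * (M *ᵥ v) i.rev := by
    have h : M.submatrix Fin.rev Fin.rev *ᵥ v = (M *ᵥ (v ∘ Fin.rev)) ∘ Fin.rev :=
      submatrix_mulVec_equiv M v Fin.rev Fin.revPerm
    rw [hM, show v ∘ Fin.rev = s • v from funext hv, mulVec_smul] at h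
    exact fun i => congrFun h i
  funext i
  rw [Pi.smul_apply, smul_eq_mul]
  rcases le_total i i.rev with hi | hi
  · exact hrow i hi
  · calc (M *ᵥ v) i = s * (lam * v i.rev) := by rw [hrev, hrow _ (by rwa [Fin.rev_rev])]
      _ = lam * v i.rev.rev := by rw [hv i.rev]; ring
      _ = lam * v i := by rw [Fin.rev_rev]

end

theorem Jmat_eq_tridiag (α w : ℕ → ℝ) (n : ℕ) :
    Jmat α w n = tridiag (fun i => if i ≤ n - 1 then α (n - i) else α (i - n + 1))
      (fun i => √(w ((n : ℤ) - 1 - i).natAbs)) (2 * n) := by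
  ext i j
  simp [Jmat, tridiag_apply]

theorem Jmat_submatrix_rev (α w : ℕ → ℝ) (n : ℕ) :
    (Jmat α w n).submatrix Fin.rev Fin.rev = Jmat α w n := by
  rw [Jmat_eq_tridiag]
  refine tridiag_submatrix_rev (fun i hi => ?_) (fun i hi => ?_)
  · by_cases h : i ≤ n - 1
    · rw [if_neg (by omega), if_pos h]
      congr 1; omega
    · rw [if_pos (by omega), if_neg h]
      congr 1; omega
  · congr 2; omega

theorem Jmat_mulVec_apply_zero (α w f : ℕ → ℝ) {n : ℕ} (hn : 0 < n) :
    (Jmat α w n *ᵥ fun k => f k) ⟨0, by omega⟩ = α n * f 0 + √(w (n - 1)) * f 1 := by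
  rw [Jmat_eq_tridiag, tridiag_mulVec_apply_zero _ _ _ (by omega)]
  simp only [if_pos (Nat.zero_le _), Nat.sub_zero, Nat.cast_zero, sub_zero]
  rw [show ((n : ℤ) - 1).natAbs = n - 1 by omega]

theorem Jmat_mulVec_apply_succ (α w f : ℕ → ℝ) {n j : ℕ} (hj : j + 2 ≤ n) :
    (Jmat α w n *ᵥ fun k => f k) ⟨j + 1, by omega⟩
      = √(w (n - 1 - j)) * f j + α (n - 1 - j) * f (j + 1) + √(w (n - 2 - j)) * f (j + 2) := by
  rw [Jmat_eq_tridiag, tridiag_mulVec_apply_succ _ _ _ (by omega), if_pos (by omega),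
    show ((n : ℤ) - 1 - j).natAbs = n - 1 - j by omega,
    show ((n : ℤ) - 1 - (j + 1 : ℕ)).natAbs = n - 2 - j by omega,
    show n - (j + 1) = n - 1 - j by omega]

theorem Emat_eq_tridiag (lam : ℝ) (α w : ℕ → ℝ) (n k : ℕ) :
    Emat lam α w n k
      = tridiag (fun i => lam - α (n - i)) (fun i => -√(w (n - 1 - i))) (n + 1 - k) := rfl

theorem det_Emat_succ_self (lam : ℝ) (α w : ℕ → ℝ) (n : ℕ) :
    (Emat lam α w n (n + 1)).det = 1 := by
  rw [Emat_eq_tridiag, Nat.sub_self, det_fin_zero]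

theorem det_Emat_self (lam : ℝ) (α w : ℕ → ℝ) (n : ℕ) :
    (Emat lam α w n n).det = lam - α n := by
  rw [Emat_eq_tridiag, Nat.add_sub_cancel_left, det_fin_one]
  simp [tridiag_apply]

theorem det_Emat_eq (lam : ℝ) (α w : ℕ → ℝ) {n k : ℕ} (hk : k < n) (hwk : 0 ≤ w k) :
    (Emat lam α w n k).det
      = (lam - α k) * (Emat lam α w n (k + 1)).det - w k * (Emat lam α w n (k + 2)).det := by
  obtain ⟨m, hm⟩ : ∃ m, n + 1 - k = m + 2 := ⟨n - 1 - k, by omega⟩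
  rw [Emat_eq_tridiag, Emat_eq_tridiag, Emat_eq_tridiag, hm,
    show n + 1 - (k + 1) = m + 1 by omega, show n + 1 - (k + 2) = m by omega,
    det_tridiag_succ_succ, show n - (m + 1) = k by omega, show n - 1 - m = k by omega, neg_sq,
    Real.sq_sqrt hwk]

theorem sqrt_prod_Ico_pos {w : ℕ → ℝ} {n : ℕ} (hw : ∀ i < n, 0 < w i) (l : ℕ) :
    0 < √(∏ m ∈ Finset.Ico l n, w m) :=
  Real.sqrt_pos.2 (Finset.prod_pos fun m hm => hw m (Finset.mem_Ico.1 hm).2)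

theorem sqrt_prod_Ico_sub_succ (w : ℕ → ℝ) {n j : ℕ} (hj : j < n)
    (hw : 0 ≤ w (n - 1 - j)) :
    √(∏ m ∈ Finset.Ico (n - (j + 1)) n, w m)
      = √(w (n - 1 - j)) * √(∏ m ∈ Finset.Ico (n - j) n, w m) := by
  rw [show n - (j + 1) = n - 1 - j by omega,
    Finset.prod_eq_prod_Ico_succ_bot (by omega : n - 1 - j < n),
    show n - 1 - j + 1 = n - j by omega, Real.sqrt_mul hw]

noncomputable def vsymHalf (lam : ℝ) (α w : ℕ → ℝ) (n j : ℕ) : ℝ :=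
  (Emat lam α w n (n - j + 1)).det / √(∏ m ∈ Finset.Ico (n - j) n, w m)

noncomputable def vsymNat (lam : ℝ) (α w : ℕ → ℝ) (n : ℕ) (s : ℝ) (j : ℕ) : ℝ :=
  if j < n then vsymHalf lam α w n j else s * vsymHalf lam α w n (2 * n - 1 - j)

theorem vsym_eq_vsymNat (lam : ℝ) (α w : ℕ → ℝ) (n : ℕ) (s : ℝ) :
    vsym lam α w n s = fun k : Fin (2 * n) => vsymNat lam α w n s k := rfl

theorem vsymHalf_zero (lam : ℝ) (α w : ℕ → ℝ) (n : ℕ) : vsymHalf lam α w n 0 = 1 := by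
  simp [vsymHalf, det_Emat_succ_self]

theorem vsymHalf_succ (lam : ℝ) (α w : ℕ → ℝ) {n j : ℕ} (hj : j < n)
    (hw : 0 ≤ w (n - 1 - j)) :
    vsymHalf lam α w n (j + 1) = (Emat lam α w n (n - j)).det
      / (√(w (n - 1 - j)) * √(∏ m ∈ Finset.Ico (n - j) n, w m)) := by
  rw [vsymHalf, show n - (j + 1) + 1 = n - j by omega, sqrt_prod_Ico_sub_succ w hj hw]

theorem vsym_ne_zero (lam : ℝ) (α w : ℕ → ℝ) {n : ℕ} (hn : 0 < n) (s : ℝ) :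
    vsym lam α w n s ≠ 0 := fun h => by
  simpa [vsym_eq_vsymNat, vsymNat, hn, vsymHalf_zero] using congrFun h ⟨0, by omega⟩

theorem vsym_rev (lam : ℝ) (α w : ℕ → ℝ) (n : ℕ) {s : ℝ} (hs : s * s = 1)
    (k : Fin (2 * n)) :
    vsym lam α w n s k.rev = s * vsym lam α w n s k := by
  simp only [vsym_eq_vsymNat, vsymNat, Fin.val_rev]
  by_cases hk : k.1 < n
  · rw [if_neg (by omega), if_pos hk, show 2 * n - 1 - (2 * n - (k + 1)) = k by omega]
  · rw [if_pos (by omega), if_neg hk, ← mul_assoc, hs, one_mul]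
    congr 1; omega

theorem Jmat_mulVec_vsym_apply_zero (lam : ℝ) (α w : ℕ → ℝ) {n : ℕ} (hn : 1 < n)
    (hw : 0 < w (n - 1)) (s : ℝ) :
    (Jmat α w n *ᵥ vsym lam α w n s) ⟨0, by omega⟩
      = lam * vsym lam α w n s ⟨0, by omega⟩ := by
  rw [vsym_eq_vsymNat, Jmat_mulVec_apply_zero _ _ _ (by omega)]
  simp only [vsymNat, if_pos (by omega : 0 < n), if_pos hn, vsymHalf_zero,
    vsymHalf_succ lam α w (by omega : 0 < n) hw.le, det_Emat_self, Nat.sub_zero, mul_one,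
    Finset.Ico_self, Finset.prod_empty, Real.sqrt_one]
  field_simp
  ring

theorem Jmat_mulVec_vsym_apply_succ (lam : ℝ) (α w : ℕ → ℝ) {n j : ℕ} (hj : j + 2 < n)
    (hw : ∀ i < n, 0 < w i) (s : ℝ) :
    (Jmat α w n *ᵥ vsym lam α w n s) ⟨j + 1, by omega⟩
      = lam * vsym lam α w n s ⟨j + 1, by omega⟩ := by
  rw [vsym_eq_vsymNat, Jmat_mulVec_apply_succ _ _ _ (by omega)]
  simp only [vsymNat, if_pos (by omega : j < n), if_pos (by omega : j + 1 < n),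
    if_pos (by omega : j + 2 < n)]
  rw [vsymHalf_succ lam α w (by omega) (hw _ (by omega)).le,
    vsymHalf_succ lam α w (by omega) (hw _ (by omega)).le, vsymHalf,
    sqrt_prod_Ico_sub_succ w (by omega) (hw _ (by omega)).le]
  have hP := sqrt_prod_Ico_pos hw (n - j)
  generalize √(∏ m ∈ Finset.Ico (n - j) n, w m) = P at hP ⊢
  rw [show n - j + 1 = n - 1 - j + 2 by omega, show n - j = n - 1 - j + 1 by omega,
    show n - (j + 1) = n - 1 - j by omega, show n - 1 - (j + 1) = n - 2 - j by omega,
    det_Emat_eq lam α w (k := n - 1 - j) (by omega) (hw _ (by omega)).le]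
  have ha := Real.sqrt_pos.2 (hw (n - 1 - j) (by omega))
  have hb := Real.sqrt_pos.2 (hw (n - 2 - j) (by omega))
  field_simp
  rw [Real.sq_sqrt (hw _ (by omega)).le]
  ring

theorem Jmat_mulVec_vsym_neg_one_apply_middle (lam : ℝ) (α w : ℕ → ℝ) {n j : ℕ}
    (hj : j + 2 = n) (hw : ∀ i < n, 0 < w i)
    (hcond : (lam - α 1 + √(w 0)) * (Emat lam α w n 2).det
      - w 1 * (Emat lam α w n 3).det = 0) :
    (Jmat α w n *ᵥ vsym lam α w n (-1)) ⟨j + 1, by omega⟩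
      = lam * vsym lam α w n (-1) ⟨j + 1, by omega⟩ := by
  rw [vsym_eq_vsymNat, Jmat_mulVec_apply_succ _ _ _ (by omega)]
  simp only [vsymNat, if_pos (by omega : j < n), if_pos (by omega : j + 1 < n),
    if_neg (by omega : ¬ j + 2 < n), show 2 * n - 1 - (j + 2) = j + 1 by omega]
  rw [vsymHalf_succ lam α w (by omega) (hw _ (by omega)).le, vsymHalf]
  have hP := sqrt_prod_Ico_pos hw (n - j)
  generalize √(∏ m ∈ Finset.Ico (n - j) n, w m) = P at hP ⊢
  rw [show n - 1 - j = 1 by omega, show n - 2 - j = 0 by omega, show n - j + 1 = 3 by omega,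
    show n - j = 2 by omega]
  have ha := Real.sqrt_pos.2 (hw 1 (by omega))
  field_simp
  rw [Real.sq_sqrt (hw 1 (by omega)).le]
  linear_combination (-1) * hcond

/-- If `λ` satisfies `(λ - α_1 + √w_0)·det(E_2) - w_1·det(E_3) = 0`, then the antisymmetric
vector `v` is an eigenvector of `J_{2n}` with eigenvalue `λ`. -/
theorem eigenvector_antisymmetric_branch
    (n : ℕ) (hn : 2 ≤ n) (α w : ℕ → ℝ) (hw : ∀ i, i < n → 0 < w i) (lam : ℝ)
    (hcond : (lam - α 1 + Real.sqrt (w 0)) * (Emat lam α w n 2).det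
        - w 1 * (Emat lam α w n 3).det = 0) :
    vsym lam α w n (-1) ≠ 0 ∧
    (Jmat α w n).mulVec (vsym lam α w n (-1)) = lam • vsym lam α w n (-1) := by
  refine ⟨vsym_ne_zero lam α w (by omega) _, mulVec_eq_smul_of_submatrix_rev
    (Jmat_submatrix_rev α w n) (vsym_rev lam α w n (by norm_num)) fun i hi => ?_⟩
  obtain ⟨_ | j, hj⟩ := i
  · exact Jmat_mulVec_vsym_apply_zero lam α w (by omega) (hw _ (by omega)) _
  · rw [Fin.le_def, Fin.val_rev, Fin.val_mk] at hi
    rcases (by omega : j + 2 < n ∨ j + 2 = n) with h | h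
    · exact Jmat_mulVec_vsym_apply_succ lam α w h hw _
    · exact Jmat_mulVec_vsym_neg_one_apply_middle lam α w h hw hcond
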